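/- Let A be a 3×3 real matrix. If A is a semimonotone matrix of exact order 2 (an E0_2-matrix), then A has exactly one negative eigenvalue: counted with multiplicity, the characteristic polynomial of A has exactly one real root that is strictly negative. -/
import Mathlib


open Matrix

/-- A real square matrix `A` is semimonotone if for every nonzero entrywise-nonnegative
vector `x` there is an index `i` with `x i > 0` and `(A *ᵥ x) i ≥ 0`. -/
def SemiMonotone {ι : Type*} [Fintype ι] (A : Matrix ι ι ℝ) : Prop :=
  ∀ x : ι → ℝ, x ≠ 0 → 0 ≤ x → ∃ i, 0 < x i ∧ 0 ≤ A.mulVec x i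

/-- A real square matrix `A` is strictly semimonotone if for every nonzero
entrywise-nonnegative vector `x` there is an index `i` with `x i > 0` and `(A *ᵥ x) i > 0`. -/
def StrictlySemiMonotone {ι : Type*} [Fintype ι] (A : Matrix ι ι ℝ) : Prop :=
  ∀ x : ι → ℝ, x ≠ 0 → 0 ≤ x → ∃ i, 0 < x i ∧ 0 < A.mulVec x i

/-- The principal submatrix of `A` with rows and columns indexed by `s`. -/
def PrincipalSubmatrix {n : ℕ} (A : Matrix (Fin n) (Fin n) ℝ) (s : Finset (Fin n)) :
    Matrix s s ℝ := A.submatrix (fun i => (i : Fin n)) (fun j => (j : Fin n))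

/-- `A` is a semimonotone matrix of exact order `k` (an `E0_k`-matrix): every principal
submatrix of order `n - k` is semimonotone, but no principal submatrix of order
`r` with `n - k < r ≤ n` is semimonotone. -/
def SemimonotoneExactOrder {n : ℕ} (A : Matrix (Fin n) (Fin n) ℝ) (k : ℕ) : Prop :=
  (∀ s : Finset (Fin n), s.card = n - k → SemiMonotone (PrincipalSubmatrix A s)) ∧
  (∀ s : Finset (Fin n), n - k < s.card → ¬ SemiMonotone (PrincipalSubmatrix A s))

/-- `A` is a strictly semimonotone matrix of exact order `k` (an `E_k`-matrix). -/
def StrictlySemimonotoneExactOrder {n : ℕ} (A : Matrix (Fin n) (Fin n) ℝ) (k : ℕ) : Prop :=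
  (∀ s : Finset (Fin n), s.card = n - k → StrictlySemiMonotone (PrincipalSubmatrix A s)) ∧
  (∀ s : Finset (Fin n), n - k < s.card → ¬ StrictlySemiMonotone (PrincipalSubmatrix A s))



open Matrix Polynomial

-- sum computation for mulVec of a principal submatrix on a pair
lemma pair_mulVec {n : ℕ} (A : Matrix (Fin n) (Fin n) ℝ) {i j : Fin n} (hij : i ≠ j)
    (x : ↥({i, j} : Finset (Fin n)) → ℝ) (k : ↥({i, j} : Finset (Fin n))) :
    (PrincipalSubmatrix A {i, j}).mulVec x k =
      A (k : Fin n) i * x ⟨i, by simp⟩ + A (k : Fin n) j * x ⟨j, by simp⟩ := by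
  classical
  have h1 : (PrincipalSubmatrix A {i, j}).mulVec x k =
      ∑ m ∈ ({i, j} : Finset (Fin n)), A (k : Fin n) m *
        (if h : m ∈ ({i, j} : Finset (Fin n)) then x ⟨m, h⟩ else 0) := by
    rw [← Finset.sum_attach ({i, j} : Finset (Fin n))
      (fun m => A (k : Fin n) m * (if h : m ∈ ({i, j} : Finset (Fin n)) then x ⟨m, h⟩ else 0))]
    simp only [Matrix.mulVec, dotProduct, PrincipalSubmatrix, Matrix.submatrix_apply,
      Finset.univ_eq_attach]
    apply Finset.sum_congr rfl
    intro l _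
    congr 1
    simp [l.2]
  rw [h1, Finset.sum_pair hij]
  congr 1
  · congr 1; simp
  · congr 1; simp

lemma pair_info {n : ℕ} (A : Matrix (Fin n) (Fin n) ℝ) {i j : Fin n} (hij : i ≠ j)
    (hii : 0 ≤ A i i) (hjj : 0 ≤ A j j)
    (h : ¬ SemiMonotone (PrincipalSubmatrix A {i, j})) :
    A i j < 0 ∧ A j i < 0 ∧ A i i * A j j < A i j * A j i := by
  classical
  unfold SemiMonotone at h
  push_neg at h
  obtain ⟨x, hx0, hxnn, hall⟩ := h
  set ii : ↥({i, j} : Finset (Fin n)) := ⟨i, by simp⟩ with hiidef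
  set jj : ↥({i, j} : Finset (Fin n)) := ⟨j, by simp⟩ with hjjdef
  have hxi : 0 ≤ x ii := hxnn ii
  have hxj : 0 ≤ x jj := hxnn jj
  have hkey : ∀ k, 0 < x k → A (k : Fin n) i * x ii + A (k : Fin n) j * x jj < 0 := by
    intro k hk
    have := hall k hk
    rw [pair_mulVec A hij x k] at this
    exact this
  -- x is supported on ii, jj only; both must be positive
  have hcases : ∀ k : ↥({i, j} : Finset (Fin n)), k = ii ∨ k = jj := by
    intro k
    have := k.2
    simp only [Finset.mem_insert, Finset.mem_singleton] at this
    rcases this with h | h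
    · left; exact Subtype.ext h
    · right; exact Subtype.ext h
  have hxipos : 0 < x ii := by
    rcases lt_or_eq_of_le hxi with h | h
    · exact h
    · exfalso
      have hxjpos : 0 < x jj := by
        rcases lt_or_eq_of_le hxj with h' | h'
        · exact h'
        · exact absurd (_root_.funext fun k => by
            rcases hcases k with rfl | rfl
            · exact h.symm
            · exact h'.symm) hx0
      have := hkey jj hxjpos
      rw [← h] at this
      nlinarith
  have hxjpos : 0 < x jj := by
    rcases lt_or_eq_of_le hxj with h | h
    · exact h
    · exfalso
      have := hkey ii hxipos
      rw [← h] at this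
      nlinarith
  have h1 := hkey ii hxipos
  have h2 := hkey jj hxjpos
  have hij1 : A i j < 0 := by nlinarith
  have hji1 : A j i < 0 := by nlinarith
  refine ⟨hij1, hji1, ?_⟩
  have k1 : A i i * x ii < -(A i j) * x jj := by linarith
  have k2 : A j j * x jj < -(A j i) * x ii := by linarith
  have := mul_lt_mul'' k1 k2 (mul_nonneg hii hxi) (mul_nonneg hjj hxj)
  nlinarith [mul_pos hxipos hxjpos]

lemma diag_nonneg {n : ℕ} (A : Matrix (Fin n) (Fin n) ℝ) (i : Fin n)
    (h : SemiMonotone (PrincipalSubmatrix A {i})) : 0 ≤ A i i := by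
  classical
  obtain ⟨k, -, hk⟩ := h (fun _ => 1) (by
    intro hc
    have := congrFun hc ⟨i, by simp⟩
    norm_num at this) (by intro k; norm_num)
  have hki : (k : Fin n) = i := Finset.mem_singleton.mp k.2
  have : (PrincipalSubmatrix A {i}).mulVec (fun _ => 1) k = A i i := by
    simp only [Matrix.mulVec, dotProduct, PrincipalSubmatrix, Matrix.submatrix_apply,
      mul_one]
    rw [Finset.univ_eq_attach, Finset.sum_attach ({i} : Finset (Fin n)) (fun m => A (k : Fin n) m)]
    simp [hki]
  rwa [this] at hk

-- the polynomial counting lemma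
lemma cubic_one_neg_root (P : ℝ[X]) (hm : P.Monic) (hdeg : P.natDegree = 3)
    (hc2 : P.coeff 2 ≤ 0) (hc0 : 0 < P.coeff 0) :
    Multiset.card (P.roots.filter (fun x => x < 0)) = 1 := by
  set T := P.roots.filter (fun x => x < 0) with hT
  have hPne : P ≠ 0 := hm.ne_zero
  -- lower bound: there is a negative root
  have hlow : 1 ≤ Multiset.card T := by
    set a := P.coeff 2
    set b := P.coeff 1
    set c := P.coeff 0
    have heval : ∀ t : ℝ, P.eval t = c + b * t + a * t ^ 2 + t ^ 3 := by
      intro t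
      rw [Polynomial.eval_eq_sum_range, hdeg]
      have h3 : P.coeff 3 = 1 := by
        have := hm.leadingCoeff
        rwa [Polynomial.leadingCoeff, hdeg] at this
      simp only [Finset.sum_range_succ, Finset.sum_range_zero, h3]
      ring
    set M : ℝ := 1 + |a| + |b| + |c| with hM
    have hM1 : 1 ≤ M := by
      have := abs_nonneg a; have := abs_nonneg b; have := abs_nonneg c
      rw [hM]; linarith
    have hMneg : P.eval (-M) < 0 := by
      rw [heval]
      have ha : a * M ^ 2 ≤ |a| * M ^ 2 := by
        apply mul_le_mul_of_nonneg_right (le_abs_self a); positivity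
      have hb : -(b * M) ≤ |b| * M := by
        have hnb : -b ≤ |b| := neg_le_abs b
        have := mul_le_mul_of_nonneg_right hnb (by positivity : (0:ℝ) ≤ M)
        linarith
      have hc : c ≤ |c| := le_abs_self c
      have hMsq : M ≤ M ^ 2 := by nlinarith
      have hsq : |a| * M ^ 2 + |b| * M + |c| ≤ (|a| + |b| + |c|) * M ^ 2 := by
        have h1 : |b| * M ≤ |b| * M ^ 2 := mul_le_mul_of_nonneg_left hMsq (abs_nonneg b)
        have h2 : |c| ≤ |c| * M ^ 2 := by nlinarith [abs_nonneg c]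
        linarith
      have hMM : (|a| + |b| + |c|) * M ^ 2 < M * M ^ 2 := by
        have : |a| + |b| + |c| < M := by rw [hM]; linarith
        exact mul_lt_mul_of_pos_right this (by positivity)
      nlinarith
    have h0 : 0 < P.eval 0 := by
      rw [heval]; simpa using hc0
    have hcont : ContinuousOn (fun t => P.eval t) (Set.Icc (-M) 0) :=
      (Polynomial.continuous P).continuousOn
    have hmem : (0 : ℝ) ∈ Set.Ioo (P.eval (-M)) (P.eval 0) := ⟨hMneg, h0⟩
    have := intermediate_value_Ioo (by linarith : (-M : ℝ) ≤ 0) hcont hmem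
    obtain ⟨t, ht, htv⟩ := this
    have htroot : t ∈ T := by
      rw [hT, Multiset.mem_filter]
      constructor
      · rw [Polynomial.mem_roots hPne]; exact htv
      · exact ht.2
    rw [Nat.one_le_iff_ne_zero]
    intro hc'
    rw [Multiset.card_eq_zero] at hc'
    rw [hc'] at htroot
    simp at htroot
  -- upper bound
  have hup : Multiset.card T < 2 := by
    by_contra hge
    push_neg at hge
    obtain ⟨r, hr⟩ := Multiset.card_pos_iff_exists_mem.mp
      (lt_of_lt_of_le (by norm_num) hge)
    have hcard' : 0 < Multiset.card (T.erase r) := by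
      rw [Multiset.card_erase_of_mem hr]
      exact Nat.lt_pred_iff.mpr (lt_of_lt_of_le (by norm_num) hge)
    obtain ⟨s, hs⟩ := Multiset.card_pos_iff_exists_mem.mp hcard'
    have hrs : ({r, s} : Multiset ℝ) ≤ T := by
      have h1 : r ::ₘ T.erase r = T := Multiset.cons_erase hr
      have h2 : ({s} : Multiset ℝ) ≤ T.erase r := Multiset.singleton_le.mpr hs
      calc ({r, s} : Multiset ℝ) = r ::ₘ {s} := rfl
        _ ≤ r ::ₘ T.erase r := Multiset.cons_le_cons r h2
        _ = T := h1
    have hTle : T ≤ P.roots := Multiset.filter_le _ _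
    have hdvd : (X - C r) * (X - C s) ∣ P := by
      have h1 : (({r, s} : Multiset ℝ).map (fun a => X - C a)).prod ∣
          (P.roots.map (fun a => X - C a)).prod :=
        Multiset.prod_dvd_prod_of_le (Multiset.map_le_map (hrs.trans hTle))
      have h2 := Polynomial.prod_multiset_X_sub_C_dvd P
      have h3 : (({r, s} : Multiset ℝ).map (fun a => X - C a)).prod = (X - C r) * (X - C s) := by
        simp [Multiset.map_cons, Multiset.prod_cons]
      rw [h3] at h1
      exact h1.trans h2
    obtain ⟨L, hL⟩ := hdvd
    have hQmonic : ((X - C r) * (X - C s) : ℝ[X]).Monic :=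
      (monic_X_sub_C r).mul (monic_X_sub_C s)
    have hLmonic : L.Monic := hQmonic.of_mul_monic_left (hL ▸ hm)
    have hQdeg : ((X - C r) * (X - C s) : ℝ[X]).natDegree = 2 := by
      rw [Polynomial.natDegree_mul (X_sub_C_ne_zero r) (X_sub_C_ne_zero s)]
      simp
    have hLdeg : L.natDegree = 1 := by
      have := Polynomial.natDegree_mul (hQmonic.ne_zero) (hLmonic.ne_zero)
      rw [← hL, hdeg, hQdeg] at this
      omega
    have hLform := hLmonic.eq_X_add_C hLdeg
    set e := L.coeff 0 with he
    have hP : P = (X - C r) * (X - C s) * (X + C e) := by rw [hL, hLform]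
    have hexp : ((X - C r) * (X - C s) * (X + C e) : ℝ[X]) =
        X ^ 3 + C (e - r - s) * X ^ 2 + C (r * s - r * e - s * e) * X + C (r * s * e) := by
      simp only [C_sub, C_add, C_mul]
      ring
    have hco2 : P.coeff 2 = e - r - s := by
      rw [hP, hexp]
      simp only [coeff_add, coeff_C_mul, coeff_X_pow, coeff_C, coeff_X]
      norm_num
    have hco0 : P.coeff 0 = r * s * e := by
      rw [hP, hexp]
      simp only [coeff_add, coeff_C_mul, coeff_X_pow, coeff_C, coeff_X]
      norm_num
    have hrneg : r < 0 := by
      have := Multiset.mem_filter.mp hr; exact this.2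
    have hsneg : s < 0 := by
      have hsT : s ∈ T := Multiset.mem_of_le (Multiset.erase_le r T) hs
      have := Multiset.mem_filter.mp hsT; exact this.2
    rw [hco2] at hc2
    rw [hco0] at hc0
    nlinarith [mul_pos (neg_pos.mpr hrneg) (neg_pos.mpr hsneg)]
  omega

theorem stmt8 (A : Matrix (Fin 3) (Fin 3) ℝ) (hA : SemimonotoneExactOrder A 2) :
    Multiset.card (A.charpoly.roots.filter (fun x => x < 0)) = 1 := by
  obtain ⟨h1, h2⟩ := hA
  have hdiag : ∀ i : Fin 3, 0 ≤ A i i := fun i =>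
    diag_nonneg A i (h1 {i} (by simp))
  have hpair : ∀ i j : Fin 3, i ≠ j →
      A i j < 0 ∧ A j i < 0 ∧ A i i * A j j < A i j * A j i := by
    intro i j hij
    exact pair_info A hij (hdiag i) (hdiag j)
      (h2 {i, j} (by rw [Finset.card_pair hij]; norm_num))
  obtain ⟨p01, p10, m01⟩ := hpair 0 1 (by decide)
  obtain ⟨p02, p20, m02⟩ := hpair 0 2 (by decide)
  obtain ⟨p12, p21, m12⟩ := hpair 1 2 (by decide)
  have htr : 0 ≤ A.trace := by
    rw [Matrix.trace_fin_three]
    have := hdiag 0; have := hdiag 1; have := hdiag 2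
    linarith
  have hdet : A.det < 0 := by
    rw [Matrix.det_fin_three]
    have h0 := hdiag 0; have h1' := hdiag 1; have h2' := hdiag 2
    nlinarith [mul_neg_of_neg_of_pos p01 (mul_pos (neg_pos.mpr p12) (neg_pos.mpr p20)),
      mul_neg_of_neg_of_pos p02 (mul_pos (neg_pos.mpr p10) (neg_pos.mpr p21)),
      mul_le_mul_of_nonneg_left m12.le h0,
      mul_nonneg (mul_nonneg h0 h1') h2',
      mul_nonneg h2' (mul_pos (neg_pos.mpr p01) (neg_pos.mpr p10)).le,
      mul_nonneg h1' (mul_pos (neg_pos.mpr p02) (neg_pos.mpr p20)).le]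
  apply cubic_one_neg_root
  · exact A.charpoly_monic
  · simp [A.charpoly_natDegree_eq_dim]
  · have := Matrix.trace_eq_neg_charpoly_coeff A
    simp at this
    linarith [htr.trans_eq this]
  · have := Matrix.det_eq_sign_charpoly_coeff A
    simp at this
    linarith
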